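/- arXiv:1704.05986 — 4 statements merged into one kernel-verified Lean document; each statement's English description precedes it below -/
import Mathlib

section
/- If T : [A,B] → [0,∞) is a Nash equilibrium arrival-time policy, meaning that for each type v, T(v) minimizes t ↦ N·F(t) + n(v)·g(t) over t ≥ 0 (where F depends on the whole profile T), and n is strictly increasing and g is strictly increasing, then T is non-increasing in v. -/
open MeasureTheory Set

/-- In the single-queue boarding game, any Nash equilibrium
arrival-time policy `T` is non-increasing in the customer type. -/
theorem stmt0 (A B N : ℝ) (hAB : A ≤ B) (hN : 0 < N)
    (μ : Measure ℝ) [IsProbabilityMeasure μ]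
    (n g F T : ℝ → ℝ)
    (hn : StrictMonoOn n (Icc A B))
    (hg : StrictMonoOn g (Ici 0))
    (hTnonneg : ∀ v ∈ Icc A B, 0 ≤ T v)
    (hF : ∀ t, F t = (μ {x ∈ Icc A B | t ≤ T x}).toReal)
    (hNE : ∀ v ∈ Icc A B, ∀ t, 0 ≤ t →
      N * F (T v) + n v * g (T v) ≤ N * F t + n v * g t) :
    AntitoneOn T (Icc A B) := by
  intro v hv w hw hvw
  rcases eq_or_lt_of_le hvw with rfl | hlt
  · exact le_rfl
  by_contra hcon
  push_neg at hcon
  have h1 := hNE v hv (T w) (hTnonneg w hw)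
  have h2 := hNE w hw (T v) (hTnonneg v hv)
  have hnv : n v < n w := hn hv hw hlt
  have hgv : g (T v) < g (T w) := hg (hTnonneg v hv) (hTnonneg w hw) hcon
  nlinarith
end

section
/- In the single-queue boarding game, if a Nash equilibrium policy T exists that is differentiable and strictly decreasing, then it is unique and given by T(v) = g⁻¹( N · ∫_v^B (1/n(x)) dG(x) ). -/
/-!
For `a ≤ b`, neither type `a` gains by boarding at `T b` nor type `b` by boarding at `T a`.
Since `F (T v) = G v`, this traps `g (T a) - g (T b)` between `N G(a, b] / n b` and
`N G(a, b] / n a`, the same interval that contains `N ∫_(a, b] dG / n` because `n` is monotone.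
So `φ v = g (T v) - N ∫_(v, B] dG / n` satisfies `|φ a - φ b| ≤ G(a, b] (N / n a - N / n b)`.
As `G` has no atoms, `(v, B]` splits into pieces of any small mass `δ`, and summing over them
gives `|φ v - φ B| ≤ δ (N / n v - N / n B)`. Hence `φ v = φ B = g (T B)`, which vanishes
because type `B` is the first to board.
-/

open MeasureTheory Set Filter Topology
open scoped symmDiff

section IntervalMass

variable {μ : Measure ℝ}

lemma measureReal_Ioc_add_Ioc [IsFiniteMeasure μ] {a b c : ℝ} (hab : a ≤ b) (hbc : b ≤ c) :
    μ.real (Ioc a b) + μ.real (Ioc b c) = μ.real (Ioc a c) := by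
  rw [← measureReal_union (Ioc_disjoint_Ioc_of_le le_rfl) measurableSet_Ioc,
    Ioc_union_Ioc_eq_Ioc hab hbc]

lemma setIntegral_Ioc_add_Ioc {f : ℝ → ℝ} {a b c : ℝ} (hab : a ≤ b) (hbc : b ≤ c)
    (hf : IntegrableOn f (Ioc a c) μ) :
    ∫ x in Ioc a b, f x ∂μ + ∫ x in Ioc b c, f x ∂μ = ∫ x in Ioc a c, f x ∂μ := by
  rw [← setIntegral_union (Ioc_disjoint_Ioc_of_le le_rfl) measurableSet_Ioc
    (hf.mono_set (Ioc_subset_Ioc_right hbc)) (hf.mono_set (Ioc_subset_Ioc_left hab)),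
    Ioc_union_Ioc_eq_Ioc hab hbc]

lemma AntitoneOn.setIntegral_Ioc_mem_Icc [IsFiniteMeasure μ] {f : ℝ → ℝ} {a b : ℝ}
    (hf : AntitoneOn f (Icc a b)) (hint : IntegrableOn f (Ioc a b) μ) :
    ∫ x in Ioc a b, f x ∂μ ∈ Icc (μ.real (Ioc a b) * f b) (μ.real (Ioc a b) * f a) := by
  have hb : ∀ x ∈ Ioc a b, b ∈ Icc a b := fun x hx => right_mem_Icc.2 (hx.1.le.trans hx.2)
  have ha : ∀ x ∈ Ioc a b, a ∈ Icc a b := fun x hx => left_mem_Icc.2 (hx.1.le.trans hx.2)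
  constructor
  · have h := setIntegral_mono_on integrableOn_const hint measurableSet_Ioc
      fun x hx => hf (Ioc_subset_Icc_self hx) (hb x hx) hx.2
    rwa [setIntegral_const, smul_eq_mul] at h
  · have h := setIntegral_mono_on hint integrableOn_const measurableSet_Ioc
      fun x hx => hf (ha x hx) (Ioc_subset_Icc_self hx) hx.1.le
    rwa [setIntegral_const, smul_eq_mul] at h

variable [IsFiniteMeasure μ] [NullSingletonClass μ]

lemma continuous_measureReal_Ioc (a : ℝ) : Continuous fun t => μ.real (Ioc a t) := by
  refine continuous_iff_continuousAt.2 fun b => ?_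
  have hsymm : ∀ t, Ioc a t ∆ Ioc a b ⊆ Icc (b - |t - b|) (b + |t - b|) := by
    intro t x hx
    have := le_abs_self (t - b)
    have := neg_abs_le (t - b)
    rcases mem_symmDiff.1 hx with ⟨⟨-, hxt⟩, hxb⟩ | ⟨⟨-, hxb⟩, hxt⟩ <;>
    · simp only [mem_Ioc, not_and, not_le] at hxb hxt
      constructor <;> grind
  have hshrink :
      Tendsto (fun t => μ.real (Icc (b - |t - b|) (b + |t - b|))) (𝓝 b) (𝓝 0) := by
    have hdist : Tendsto (fun t => |t - b|) (𝓝 b) (𝓝 0) :=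
      (continuous_id.sub continuous_const).abs.tendsto' b 0 (by simp)
    exact (ENNReal.tendsto_toReal ENNReal.zero_ne_top).comp
      ((tendsto_measure_Icc μ b).comp hdist)
  refine tendsto_iff_norm_sub_tendsto_zero.2
    (squeeze_zero (fun _ => norm_nonneg _) (fun t => ?_) hshrink)
  exact (abs_measureReal_sub_le_measureReal_symmDiff measurableSet_Ioc.nullMeasurableSet
    measurableSet_Ioc.nullMeasurableSet).trans (measureReal_mono (hsymm t))

lemma dist_le_mul_of_measureReal_Ioc_le {φ w : ℝ → ℝ} {a b δ : ℝ} (hδ : 0 ≤ δ)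
    (hw : AntitoneOn w (Icc a b))
    (hφ : ∀ x ∈ Icc a b, ∀ y ∈ Icc a b, x ≤ y →
      dist (φ x) (φ y) ≤ μ.real (Ioc x y) * (w x - w y))
    (j : ℕ) : ∀ x ∈ Icc a b, ∀ y ∈ Icc a b, x ≤ y → μ.real (Ioc x y) ≤ j * δ →
      dist (φ x) (φ y) ≤ δ * (w x - w y) := by
  have hsmall : ∀ x ∈ Icc a b, ∀ y ∈ Icc a b, x ≤ y → μ.real (Ioc x y) ≤ δ →
      dist (φ x) (φ y) ≤ δ * (w x - w y) := fun x hx y hy hxy hμ =>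
    (hφ x hx y hy hxy).trans (mul_le_mul_of_nonneg_right hμ (sub_nonneg.2 (hw hx hy hxy)))
  induction j with
  | zero =>
    intro x hx y hy hxy hμ
    exact hsmall x hx y hy hxy (hμ.trans (by simpa using hδ))
  | succ j ih =>
    intro x hx y hy hxy hμ
    by_cases hxy_small : μ.real (Ioc x y) ≤ δ
    · exact hsmall x hx y hy hxy hxy_small
    obtain ⟨z, hz, hxz⟩ : ∃ z ∈ Icc x y, μ.real (Ioc x z) = δ :=
      intermediate_value_Icc hxy (continuous_measureReal_Ioc x).continuousOn
        ⟨by simpa using hδ, le_of_not_ge hxy_small⟩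
    have hz_mem : z ∈ Icc a b := ⟨hx.1.trans hz.1, hz.2.trans hy.2⟩
    have hzy : μ.real (Ioc z y) ≤ j * δ := by
      have := measureReal_Ioc_add_Ioc (μ := μ) hz.1 hz.2
      push_cast at hμ
      linarith
    calc dist (φ x) (φ y) ≤ dist (φ x) (φ z) + dist (φ z) (φ y) := dist_triangle _ _ _
      _ ≤ δ * (w x - w z) + δ * (w z - w y) :=
        add_le_add (hsmall x hx z hz_mem hz.1 hxz.le) (ih z hz_mem y hy hz.2 hzy)
      _ = δ * (w x - w y) := by ring

lemma eq_of_dist_le_measureReal_Ioc_mul {φ w : ℝ → ℝ} {a b : ℝ} (hab : a ≤ b)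
    (hw : AntitoneOn w (Icc a b))
    (hφ : ∀ x ∈ Icc a b, ∀ y ∈ Icc a b, x ≤ y →
      dist (φ x) (φ y) ≤ μ.real (Ioc x y) * (w x - w y)) :
    φ a = φ b := by
  have ha : a ∈ Icc a b := left_mem_Icc.2 hab
  have hb : b ∈ Icc a b := right_mem_Icc.2 hab
  have hC : 0 < w a - w b + 1 := by linarith [hw ha hb hab]
  refine eq_of_forall_dist_le fun ε hε => ?_
  obtain ⟨j, hj⟩ := exists_nat_ge (μ.real (Ioc a b) / (ε / (w a - w b + 1)))
  calc dist (φ a) (φ b) ≤ ε / (w a - w b + 1) * (w a - w b) :=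
        dist_le_mul_of_measureReal_Ioc_le (by positivity) hw hφ j a ha b hb hab
          (by rwa [div_le_iff₀ (by positivity)] at hj)
    _ ≤ ε := by
        rw [div_mul_eq_mul_div, div_le_iff₀ hC]
        linarith

end IntervalMass

lemma StrictAntiOn.sep_Icc_apply_le_eq_Icc {T : ℝ → ℝ} {A B a : ℝ}
    (hT : StrictAntiOn T (Icc A B)) (ha : a ∈ Icc A B) :
    {x ∈ Icc A B | T a ≤ T x} = Icc A a := by
  ext x
  constructor
  · rintro ⟨hx, hTx⟩
    exact ⟨hx.1, (hT.le_iff_ge ha hx).1 hTx⟩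
  · rintro ⟨hAx, hxa⟩
    have hx : x ∈ Icc A B := ⟨hAx, hxa.trans ha.2⟩
    exact ⟨hx, (hT.le_iff_ge ha hx).2 hxa⟩

def IsNashEquilibrium (s : Set ℝ) (N : ℝ) (n g F T : ℝ → ℝ) : Prop :=
  ∀ v ∈ s, ∀ t, 0 ≤ t → N * F (T v) + n v * g (T v) ≤ N * F t + n v * g t

section Equilibrium

variable {μ : Measure ℝ} [IsFiniteMeasure μ] {A B N : ℝ} {n g F T : ℝ → ℝ}

lemma IsNashEquilibrium.comp_sub_comp_mem_Icc (hNE : IsNashEquilibrium (Icc A B) N n g F T)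
    (hF : ∀ t, F t = μ.real {x ∈ Icc A B | t ≤ T x}) (hnpos : ∀ v ∈ Icc A B, 0 < n v)
    (hTnonneg : ∀ v ∈ Icc A B, 0 ≤ T v) (hTanti : StrictAntiOn T (Icc A B))
    {a b : ℝ} (ha : a ∈ Icc A B) (hb : b ∈ Icc A B) (hab : a ≤ b) :
    g (T a) - g (T b) ∈
      Icc (μ.real (Ioc a b) * (N * (n b)⁻¹)) (μ.real (Ioc a b) * (N * (n a)⁻¹)) := by
  have hFT : ∀ c ∈ Icc A B, F (T c) = μ.real (Icc A c) := fun c hc => by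
    rw [hF, hTanti.sep_Icc_apply_le_eq_Icc hc]
  have hsplit : μ.real (Icc A b) = μ.real (Icc A a) + μ.real (Ioc a b) := by
    rw [← measureReal_union ((Iic_disjoint_Ioc le_rfl).mono_left Icc_subset_Iic_self)
      measurableSet_Ioc,
      Icc_union_Ioc_eq_Icc ha.1 hab]
  have hdev_a := hNE a ha (T b) (hTnonneg b hb)
  have hdev_b := hNE b hb (T a) (hTnonneg a ha)
  rw [hFT a ha, hFT b hb, hsplit] at hdev_a hdev_b
  constructor
  · rw [show μ.real (Ioc a b) * (N * (n b)⁻¹) = N * μ.real (Ioc a b) / n b by ring,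
      div_le_iff₀ (hnpos b hb)]
    linarith
  · rw [show μ.real (Ioc a b) * (N * (n a)⁻¹) = N * μ.real (Ioc a b) / n a by ring,
      le_div_iff₀ (hnpos a ha)]
    linarith


lemma IsNashEquilibrium.dist_sub_integral_le (hNE : IsNashEquilibrium (Icc A B) N n g F T)
    (hF : ∀ t, F t = μ.real {x ∈ Icc A B | t ≤ T x}) (hN : 0 ≤ N)
    (hn : AntitoneOn (fun x => (n x)⁻¹) (Icc A B)) (hnpos : ∀ v ∈ Icc A B, 0 < n v)
    (hInt : IntegrableOn (fun x => (n x)⁻¹) (Icc A B) μ)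
    (hTnonneg : ∀ v ∈ Icc A B, 0 ≤ T v) (hTanti : StrictAntiOn T (Icc A B))
    {a b : ℝ} (ha : a ∈ Icc A B) (hb : b ∈ Icc A B) (hab : a ≤ b) :
    dist (g (T a) - N * ∫ x in Ioc a B, (n x)⁻¹ ∂μ)
        (g (T b) - N * ∫ x in Ioc b B, (n x)⁻¹ ∂μ) ≤
      μ.real (Ioc a b) * (N * (n a)⁻¹ - N * (n b)⁻¹) := by
  have hsub : ∀ c ∈ Icc A B, Ioc c B ⊆ Icc A B := fun c hc x hx =>
    ⟨hc.1.trans hx.1.le, hx.2⟩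
  have hsplit := setIntegral_Ioc_add_Ioc hab hb.2 (hInt.mono_set (hsub a ha))
  have hint := (hn.mono (Icc_subset_Icc ha.1 hb.2)).setIntegral_Ioc_mem_Icc
    (hInt.mono_set ((Ioc_subset_Ioc_right hb.2).trans (hsub a ha)))
  have hNint : N * ∫ x in Ioc a b, (n x)⁻¹ ∂μ ∈
      Icc (μ.real (Ioc a b) * (N * (n b)⁻¹)) (μ.real (Ioc a b) * (N * (n a)⁻¹)) :=
    ⟨by linarith [mul_le_mul_of_nonneg_left hint.1 hN],
      by linarith [mul_le_mul_of_nonneg_left hint.2 hN]⟩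
  calc _ = dist (g (T a) - g (T b)) (N * ∫ x in Ioc a b, (n x)⁻¹ ∂μ) := by
        rw [Real.dist_eq, Real.dist_eq, ← hsplit]
        ring_nf
    _ ≤ _ := Real.dist_le_of_mem_Icc
        (hNE.comp_sub_comp_mem_Icc hF hnpos hTnonneg hTanti ha hb hab) hNint
    _ = _ := by ring

lemma IsNashEquilibrium.comp_apply_right_eq_zero (hNE : IsNashEquilibrium (Icc A B) N n g F T)
    (hF : ∀ t, F t = μ.real {x ∈ Icc A B | t ≤ T x}) (hN : 0 ≤ N)
    (hnpos : ∀ v ∈ Icc A B, 0 < n v) (hgmono : MonotoneOn g (Ici 0)) (hg0 : g 0 = 0)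
    (hTnonneg : ∀ v ∈ Icc A B, 0 ≤ T v) (hTanti : StrictAntiOn T (Icc A B))
    (hB : B ∈ Icc A B) : g (T B) = 0 := by
  have hF_le : F 0 ≤ F (T B) := by
    rw [hF, hF, hTanti.sep_Icc_apply_le_eq_Icc hB]
    exact measureReal_mono (sep_subset _ _)
  have hdev := hNE B hB 0 le_rfl
  have hnonpos : n B * g (T B) ≤ 0 := by
    rw [hg0, mul_zero, add_zero] at hdev
    nlinarith [mul_le_mul_of_nonneg_left hF_le hN]
  have hnonneg : 0 ≤ g (T B) := hg0 ▸ hgmono self_mem_Ici (hTnonneg B hB) (hTnonneg B hB)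
  linarith [nonpos_of_mul_nonpos_right hnonpos (hnpos B hB)]

end Equilibrium

theorem stmt3_general (A B N : ℝ) (hN : 0 < N)
    (μ : Measure ℝ) [IsProbabilityMeasure μ] [NullSingletonClass μ]
    (n g F T : ℝ → ℝ)
    (hn : StrictMonoOn n (Icc A B))
    (hnpos : ∀ v ∈ Icc A B, 0 < n v)
    (hgmono : StrictMonoOn g (Ici 0))
    (hg0 : g 0 = 0)
    (hInt : IntegrableOn (fun x => (n x)⁻¹) (Icc A B) μ)
    (hTnonneg : ∀ v ∈ Icc A B, 0 ≤ T v)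
    (hTanti : StrictAntiOn T (Icc A B))
    (hF : ∀ t, F t = (μ {x ∈ Icc A B | t ≤ T x}).toReal)
    (hNE : ∀ v ∈ Icc A B, ∀ t, 0 ≤ t →
      N * F (T v) + n v * g (T v) ≤ N * F t + n v * g t) :
    ∀ v ∈ Icc A B, g (T v) = N * ∫ x in Ioc v B, (n x)⁻¹ ∂μ := by
  intro v hv
  have hB : B ∈ Icc A B := ⟨hv.1.trans hv.2, le_rfl⟩
  have hn_inv : AntitoneOn (fun x => (n x)⁻¹) (Icc A B) := fun x hx y hy hxy =>
    inv_anti₀ (hnpos x hx) (hn.monotoneOn hx hy hxy)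
  have hw : AntitoneOn (fun x => N * (n x)⁻¹) (Icc v B) := fun x hx y hy hxy =>
    mul_le_mul_of_nonneg_left (hn_inv (⟨hv.1.trans hx.1, hx.2⟩ : x ∈ Icc A B)
      ⟨hv.1.trans hy.1, hy.2⟩ hxy) hN.le
  have hconst := eq_of_dist_le_measureReal_Ioc_mul (μ := μ) hv.2 hw fun x hx y hy hxy =>
    IsNashEquilibrium.dist_sub_integral_le hNE hF hN.le hn_inv hnpos hInt hTnonneg hTanti
      ⟨hv.1.trans hx.1, hx.2⟩ ⟨hv.1.trans hy.1, hy.2⟩ hxy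
  have hTB := IsNashEquilibrium.comp_apply_right_eq_zero hNE hF hN.le hnpos
    hgmono.monotoneOn hg0 hTnonneg hTanti hB
  simpa [hTB, sub_eq_zero] using hconst

/-- The Nash equilibrium of the single-queue boarding game, when it
exists (differentiable and strictly decreasing), is unique and given by
`T(v) = g⁻¹( N ∫_v^B dG(x)/n(x) )`, stated equivalently as
`g(T(v)) = N ∫_v^B dG(x)/n(x)` since `g` is strictly increasing. -/
theorem stmt3 (A B N : ℝ) (hAB : A ≤ B) (hN : 0 < N)
    (μ : Measure ℝ) [IsProbabilityMeasure μ] [NullSingletonClass μ]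
    (hsupp : μ (Icc A B) = 1)
    (n g F T : ℝ → ℝ)
    (hn : StrictMonoOn n (Icc A B))
    (hnpos : ∀ v ∈ Icc A B, 0 < n v)
    (hgmono : StrictMonoOn g (Ici 0))
    (hgcont : Continuous g)
    (hgdiff : ∀ t ∈ Ici (0:ℝ), DifferentiableAt ℝ g t)
    (hg0 : g 0 = 0)
    (hInt : IntegrableOn (fun x => (n x)⁻¹) (Icc A B) μ)
    (hTnonneg : ∀ v ∈ Icc A B, 0 ≤ T v)
    (hTanti : StrictAntiOn T (Icc A B))
    (hTdiff : ∀ v ∈ Icc A B, DifferentiableAt ℝ T v)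
    (hF : ∀ t, F t = (μ {x ∈ Icc A B | t ≤ T x}).toReal)
    (hNE : ∀ v ∈ Icc A B, ∀ t, 0 ≤ t →
      N * F (T v) + n v * g (T v) ≤ N * F t + n v * g t) :
    ∀ v ∈ Icc A B, g (T v) = N * ∫ x in Ioc v B, (n x)⁻¹ ∂μ :=
  stmt3_general A B N hN μ n g F T hn hnpos hgmono hg0 hInt hTnonneg hTanti hF hNE
end

section
/- In the generalized single-queue game with cost c_v(t) = h(F(t)) + n(v)·g(t), where h is increasing and continuously differentiable, any (differentiable, strictly decreasing) Nash equilibrium is unique and given by T(v) = g⁻¹( ∫_v^B h'(G(x))/n(x) dG(x) ). -/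
/-!
Write `u = g ∘ T`. Comparing the equilibrium cost of a type `a ≤ b` with that of mimicking `b`,
and vice versa, and using `F (T v) = G v`, gives the sandwich
`n a (u a - u b) ≤ h (G b) - h (G a) ≤ n b (u a - u b)`; moreover `u B = 0`, since type `B`
loses nothing in `h` by arriving at time `0` (`F (T B) = G B = 1 = F 0`).
As `h (G b) - h (G a) = ∫_{(a,b]} h' ∘ G dμ`, the difference
`∫_{(a,b]} h' (G x) / n x dμ - (u a - u b)` is an additive function of the interval that is
bounded, on short intervals, by `ε` times the increment of `-1/n`. Summing over a fine partition
of `[v, B]` shows that it vanishes.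
-/

open MeasureTheory Set ProbabilityTheory

section IntervalAdditive

variable {v B : ℝ} {I : ℝ → ℝ → ℝ} {W : ℝ → ℝ}

theorem abs_le_mul_sub_of_additive (hvB : v ≤ B)
    (hadd : ∀ a b c, v ≤ a → a ≤ b → b ≤ c → c ≤ B → I a c = I a b + I b c)
    {ε δ : ℝ} (hδ : 0 < δ)
    (hsmall : ∀ a b, v ≤ a → a ≤ b → b ≤ B → b - a < δ →
      |I a b| ≤ ε * (W b - W a)) :
    |I v B| ≤ ε * (W B - W v) := by
  obtain ⟨N, hN⟩ := exists_nat_gt ((B - v) / δ)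
  have hN0 : (0 : ℝ) < N := (div_nonneg (sub_nonneg.2 hvB) hδ.le).trans_lt hN
  set d := (B - v) / N
  have hd : 0 ≤ d := div_nonneg (sub_nonneg.2 hvB) hN0.le
  have hdδ : d < δ := by rwa [div_lt_iff₀ hN0, mul_comm, ← div_lt_iff₀ hδ]
  set p : ℕ → ℝ := fun i => v + i * d
  have hp0 : p 0 = v := by simp [p]
  have hpN : p N = B := by simp only [p, d]; field_simp; ring
  have hv_le : ∀ i, v ≤ p i := fun i => le_add_of_nonneg_right (by positivity)
  have hp_succ : ∀ i, p (i + 1) = p i + d := fun i => by simp only [p]; push_cast; ring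
  have hle_B : ∀ i ≤ N, p i ≤ B := fun i hi => by
    rw [← hpN]; simp only [p]; gcongr
  have hsum : ∀ j ≤ N, I v (p j) = ∑ i ∈ Finset.range j, I (p i) (p (i + 1)) := by
    intro j
    induction j with
    | zero =>
      intro _
      have := hadd v v v le_rfl le_rfl le_rfl hvB
      rw [hp0, Finset.sum_range_zero]
      linarith
    | succ j ih =>
      intro hj
      rw [Finset.sum_range_succ, ← ih (by omega),
        hadd v (p j) (p (j + 1)) le_rfl (hv_le j) (by rw [hp_succ]; linarith) (hle_B _ hj)]
  calc |I v B| = |∑ i ∈ Finset.range N, I (p i) (p (i + 1))| := by rw [← hsum N le_rfl, hpN]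
    _ ≤ ∑ i ∈ Finset.range N, |I (p i) (p (i + 1))| := Finset.abs_sum_le_sum_abs _ _
    _ ≤ ∑ i ∈ Finset.range N, ε * (W (p (i + 1)) - W (p i)) := by
      refine Finset.sum_le_sum fun i hi => hsmall _ _ (hv_le i) ?_ (hle_B _ ?_) ?_
      · rw [hp_succ]; linarith
      · exact Finset.mem_range.1 hi
      · rw [hp_succ]; linarith
    _ = ε * (W B - W v) := by
      rw [← Finset.mul_sum, Finset.sum_range_sub (fun i => W (p i)), hpN, hp0]

theorem eq_zero_of_additive_of_abs_le_mul_sub (hvB : v ≤ B)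
    (hadd : ∀ a b c, v ≤ a → a ≤ b → b ≤ c → c ≤ B → I a c = I a b + I b c)
    (hloc : ∀ ε > 0, ∃ δ > 0, ∀ a b, v ≤ a → a ≤ b → b ≤ B → b - a < δ →
      |I a b| ≤ ε * (W b - W a)) :
    I v B = 0 := by
  have hbound : ∀ ε > 0, |I v B| ≤ ε * (W B - W v) := fun ε hε =>
    let ⟨_, hδ, hsmall⟩ := hloc ε hε
    abs_le_mul_sub_of_additive hvB hadd hδ hsmall
  have hK : 0 ≤ W B - W v := by
    have := hbound 1 one_pos
    linarith [abs_nonneg (I v B)]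
  refine abs_nonpos_iff.1 (le_of_forall_pos_lt_add fun ε hε => ?_)
  calc |I v B| ≤ ε / (W B - W v + 1) * (W B - W v) := hbound _ (by positivity)
    _ < 0 + ε := by
      rw [zero_add, div_mul_eq_mul_div, div_lt_iff₀ (by positivity)]
      nlinarith

end IntervalAdditive

theorem continuous_cdf (μ : Measure ℝ) [IsProbabilityMeasure μ] [NullSingletonClass μ] :
    Continuous (cdf μ) := by
  refine continuous_iff_continuousAt.2 fun x => ?_
  have hleft : Function.leftLim (cdf μ) x = cdf μ x := by
    have hatom := (cdf μ).measure_singleton x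
    rw [measure_cdf, measure_singleton, eq_comm, ENNReal.ofReal_eq_zero, sub_nonpos] at hatom
    exact le_antisymm ((cdf μ).mono.leftLim_le le_rfl) hatom
  rw [(cdf μ).mono.continuousAt_iff_leftLim_eq_rightLim, hleft, (cdf μ).rightLim_eq]

theorem ContinuousOn.comp_cdf {f : ℝ → ℝ} (hf : ContinuousOn f (Icc 0 1)) (μ : Measure ℝ)
    [IsProbabilityMeasure μ] [NullSingletonClass μ] : Continuous fun x => f (cdf μ x) :=
  hf.comp_continuous (continuous_cdf μ) fun x => ⟨cdf_nonneg μ x, cdf_le_one μ x⟩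

theorem cdf_eq_one_of_measure_Icc_eq_one {μ : Measure ℝ} [IsProbabilityMeasure μ] {A B : ℝ}
    (hsupp : μ (Icc A B) = 1) : cdf μ B = 1 := by
  rw [cdf_eq_real, measureReal_def,
    le_antisymm prob_le_one (hsupp ▸ measure_mono Icc_subset_Iic_self), ENNReal.toReal_one]

theorem measureReal_Ioc_eq_cdf_sub_cdf (μ : Measure ℝ) [IsProbabilityMeasure μ] {a b : ℝ}
    (hab : a ≤ b) : μ.real (Ioc a b) = cdf μ b - cdf μ a := by
  have hIoc := (cdf μ).measure_Ioc a b
  rw [measure_cdf] at hIoc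
  rw [measureReal_def, hIoc, ENNReal.toReal_ofReal (sub_nonneg.2 (monotone_cdf μ hab))]

theorem setIntegral_Ioc_eq_add {μ : Measure ℝ} {f : ℝ → ℝ} {a b c : ℝ}
    (hf : IntegrableOn f (Ioc a c) μ) (hab : a ≤ b) (hbc : b ≤ c) :
    ∫ x in Ioc a c, f x ∂μ = ∫ x in Ioc a b, f x ∂μ + ∫ x in Ioc b c, f x ∂μ := by
  rw [← Ioc_union_Ioc_eq_Ioc hab hbc] at hf ⊢
  exact setIntegral_union (Ioc_disjoint_Ioc_of_le le_rfl) measurableSet_Ioc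
    (hf.mono_set subset_union_left) (hf.mono_set subset_union_right)

theorem HasDerivAt.nonneg_of_monotoneOn_Icc {h : ℝ → ℝ} {h' a b s : ℝ}
    (hd : HasDerivAt h h' s) (hmono : MonotoneOn h (Icc a b)) (hab : a < b) (hs : s ∈ Icc a b) :
    0 ≤ h' :=
  hd.hasDerivWithinAt.derivWithin (uniqueDiffOn_Icc hab s hs) ▸ hmono.derivWithin_nonneg

theorem setIntegral_comp_cdf (μ : Measure ℝ) [IsProbabilityMeasure μ] [NullSingletonClass μ]
    {h h' : ℝ → ℝ} (hderiv : ∀ s ∈ Icc (0 : ℝ) 1, HasDerivAt h (h' s) s)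
    (hcont : ContinuousOn h' (Icc 0 1)) {a b : ℝ} (hab : a ≤ b) :
    ∫ x in Ioc a b, h' (cdf μ x) ∂μ = h (cdf μ b) - h (cdf μ a) := by
  have hk := hcont.comp_cdf μ
  rw [← sub_eq_zero]
  refine eq_zero_of_additive_of_abs_le_mul_sub (W := fun x => 2 * cdf μ x) hab
    (I := fun a b => ∫ x in Ioc a b, h' (cdf μ x) ∂μ - (h (cdf μ b) - h (cdf μ a)))
    (fun a b c _ hab hbc _ => by
      simp only [setIntegral_Ioc_eq_add hk.integrableOn_Ioc hab hbc]; ring) fun ε hε => ?_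
  obtain ⟨δ, hδ, hkδ⟩ := Metric.uniformContinuousOn_iff_le.1
    (isCompact_Icc.uniformContinuousOn_of_continuous hk.continuousOn) ε hε
  refine ⟨δ, hδ, fun a' b' ha' hab' hb' hδab => ?_⟩
  set c := h' (cdf μ a')
  have hclose : ∀ y ∈ Icc a' b', |h' (cdf μ y) - c| ≤ ε := fun y hy =>
    hkδ y ⟨ha'.trans hy.1, hy.2.trans hb'⟩ a' ⟨ha', hab'.trans hb'⟩
      (by rw [Real.dist_eq, abs_of_nonneg (sub_nonneg.2 hy.1)]; linarith [hy.2])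
  have hintegral : |∫ x in Ioc a' b', h' (cdf μ x) ∂μ - c * (cdf μ b' - cdf μ a')|
      ≤ ε * (cdf μ b' - cdf μ a') := by
    rw [← measureReal_Ioc_eq_cdf_sub_cdf μ hab', mul_comm c, ← smul_eq_mul,
      ← setIntegral_const, ← integral_sub hk.integrableOn_Ioc (integrable_const c)]
    exact norm_setIntegral_le_of_norm_le_const (f := fun x => h' (cdf μ x) - c)
      (measure_lt_top μ _) fun x hx => hclose x (Ioc_subset_Icc_self hx)
  have hincrement : |h (cdf μ b') - h (cdf μ a') - c * (cdf μ b' - cdf μ a')|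
      ≤ ε * (cdf μ b' - cdf μ a') := by
    have hmono := monotone_cdf μ hab'
    have hsub : Icc (cdf μ a') (cdf μ b') ⊆ Icc 0 1 :=
      Icc_subset_Icc (cdf_nonneg μ a') (cdf_le_one μ b')
    have := norm_image_sub_le_of_norm_deriv_le_segment' (f := fun s => h s - c * s) (C := ε)
      (fun s hs => ((hderiv s (hsub hs)).sub ((hasDerivAt_id s).const_mul c)).hasDerivWithinAt)
      (fun s hs => ?_) (cdf μ b') ⟨hmono, le_rfl⟩
    · simp only [Real.norm_eq_abs] at this
      convert this using 2; ring
    · obtain ⟨y, hy, rfl⟩ := intermediate_value_Icc hab' (continuous_cdf μ).continuousOn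
        (Ico_subset_Icc_self hs)
      simpa using hclose y hy
  simp only [abs_le] at hintegral hincrement ⊢
  constructor <;> linarith [hintegral.1, hintegral.2, hincrement.1, hincrement.2]

theorem setIntegral_div_eq_sub_of_sandwich {μ : Measure ℝ} {A B : ℝ} {n k u Φ : ℝ → ℝ}
    (hnpos : ∀ x ∈ Icc A B, 0 < n x) (hn : MonotoneOn n (Icc A B))
    (hk : ∀ x ∈ Icc A B, 0 ≤ k x) (hkint : IntegrableOn k (Icc A B) μ)
    (hknint : IntegrableOn (fun x => k x / n x) (Icc A B) μ) (hΦ : ContinuousOn Φ (Icc A B))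
    (hΦk : ∀ a ∈ Icc A B, ∀ b ∈ Icc A B, a ≤ b →
      Φ b - Φ a = ∫ x in Ioc a b, k x ∂μ)
    (hu : ∀ a ∈ Icc A B, ∀ b ∈ Icc A B, a ≤ b →
      n a * (u a - u b) ≤ Φ b - Φ a ∧ Φ b - Φ a ≤ n b * (u a - u b))
    {v : ℝ} (hv : v ∈ Icc A B) :
    ∫ x in Ioc v B, k x / n x ∂μ = u v - u B := by
  have hIoc : ∀ {a b}, A ≤ a → b ≤ B → Ioc a b ⊆ Icc A B := fun ha hb =>
    Ioc_subset_Icc_self.trans (Icc_subset_Icc ha hb)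
  rw [← sub_eq_zero]
  refine eq_zero_of_additive_of_abs_le_mul_sub (W := fun x => -(n x)⁻¹) hv.2
    (I := fun a b => ∫ x in Ioc a b, k x / n x ∂μ - (u a - u b))
    (fun a b c hva hab hbc hcB => by
      simp only [setIntegral_Ioc_eq_add (hknint.mono_set (hIoc (hv.1.trans hva) hcB)) hab hbc]
      ring) fun ε hε => ?_
  obtain ⟨δ, hδ, hΦδ⟩ := Metric.uniformContinuousOn_iff_le.1
    (isCompact_Icc.uniformContinuousOn_of_continuous hΦ) ε hε
  refine ⟨δ, hδ, fun a b hva hab hbB hδab => ?_⟩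
  have hAa := hv.1.trans hva
  have ha : a ∈ Icc A B := ⟨hAa, hab.trans hbB⟩
  have hb : b ∈ Icc A B := ⟨hAa.trans hab, hbB⟩
  have hs : Ioc a b ⊆ Icc A B := hIoc hAa hbB
  have hΦab := hΦk a ha b hb hab
  have hZ : |Φ b - Φ a| ≤ ε := by
    refine hΦδ b hb a ha ?_
    rw [Real.dist_eq, abs_of_nonneg (sub_nonneg.2 hab)]
    exact hδab.le
  have hX_le : ∫ x in Ioc a b, k x / n x ∂μ ≤ (Φ b - Φ a) / n a := by
    rw [hΦab, ← integral_div]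
    exact setIntegral_mono_on (hknint.mono_set hs) ((hkint.mono_set hs).div_const _)
      measurableSet_Ioc fun x hx =>
        div_le_div_of_nonneg_left (hk x (hs hx)) (hnpos a ha) (hn ha (hs hx) hx.1.le)
  have hX_ge : (Φ b - Φ a) / n b ≤ ∫ x in Ioc a b, k x / n x ∂μ := by
    rw [hΦab, ← integral_div]
    exact setIntegral_mono_on ((hkint.mono_set hs).div_const _) (hknint.mono_set hs)
      measurableSet_Ioc fun x hx =>
        div_le_div_of_nonneg_left (hk x (hs hx)) (hnpos x (hs hx)) (hn (hs hx) hb hx.2)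
  obtain ⟨hu_le, hu_ge⟩ := hu a ha b hb hab
  have hY_le : u a - u b ≤ (Φ b - Φ a) / n a := by rw [le_div_iff₀ (hnpos a ha)]; linarith
  have hY_ge : (Φ b - Φ a) / n b ≤ u a - u b := by rw [div_le_iff₀ (hnpos b hb)]; linarith
  have hinv : (n b)⁻¹ ≤ (n a)⁻¹ := inv_anti₀ (hnpos a ha) (hn ha hb hab)
  calc |∫ x in Ioc a b, k x / n x ∂μ - (u a - u b)|
      ≤ (Φ b - Φ a) / n a - (Φ b - Φ a) / n b :=
        abs_sub_le_iff.2 ⟨by linarith, by linarith⟩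
    _ = (Φ b - Φ a) * ((n a)⁻¹ - (n b)⁻¹) := by ring
    _ ≤ ε * (-(n b)⁻¹ - -(n a)⁻¹) := by
      rw [neg_sub_neg]
      exact mul_le_mul_of_nonneg_right ((le_abs_self _).trans hZ) (sub_nonneg.2 hinv)

theorem setIntegral_comp_cdf_div_eq_sub (μ : Measure ℝ) [IsProbabilityMeasure μ]
    [NullSingletonClass μ] {A B : ℝ} {n h h' u : ℝ → ℝ}
    (hnpos : ∀ x ∈ Icc A B, 0 < n x) (hn : MonotoneOn n (Icc A B))
    (hhmono : MonotoneOn h (Icc 0 1)) (hhderiv : ∀ s ∈ Icc (0 : ℝ) 1, HasDerivAt h (h' s) s)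
    (hhcont : ContinuousOn h' (Icc 0 1))
    (hu : ∀ a ∈ Icc A B, ∀ b ∈ Icc A B, a ≤ b →
      n a * (u a - u b) ≤ h (cdf μ b) - h (cdf μ a) ∧
        h (cdf μ b) - h (cdf μ a) ≤ n b * (u a - u b))
    {v : ℝ} (hv : v ∈ Icc A B) :
    ∫ x in Ioc v B, h' (cdf μ x) / n x ∂μ = u v - u B := by
  have hmem : ∀ x, cdf μ x ∈ Icc (0 : ℝ) 1 := fun x => ⟨cdf_nonneg μ x, cdf_le_one μ x⟩
  have hk := hhcont.comp_cdf μ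
  have hh : ContinuousOn h (Icc 0 1) := fun s hs =>
    (hhderiv s hs).continuousAt.continuousWithinAt
  have hn_inv : AntitoneOn (fun x => (n x)⁻¹) (Icc A B) := fun a ha b hb hab =>
    inv_anti₀ (hnpos a ha) (hn ha hb hab)
  exact setIntegral_div_eq_sub_of_sandwich hnpos hn
    (fun x _ => (hhderiv _ (hmem x)).nonneg_of_monotoneOn_Icc hhmono one_pos (hmem x))
    hk.integrableOn_Icc
    ((hn_inv.integrableOn_isCompact isCompact_Icc).continuousOn_mul hk.continuousOn isCompact_Icc)
    (hh.comp_cdf μ).continuousOn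
    (fun a _ b _ hab => (setIntegral_comp_cdf μ hhderiv hhcont hab).symm) hu hv

theorem measureReal_setOf_le_of_strictAntiOn {μ : Measure ℝ} [IsProbabilityMeasure μ]
    {A B w : ℝ} {T : ℝ → ℝ} (hsupp : μ (Icc A B) = 1) (hT : StrictAntiOn T (Icc A B))
    (hw : w ∈ Icc A B) :
    μ.real {x ∈ Icc A B | T w ≤ T x} = cdf μ w := by
  have hset : {x ∈ Icc A B | T w ≤ T x} = Icc A w := by
    ext x
    constructor
    · rintro ⟨hx, hTx⟩
      exact ⟨hx.1, (hT.le_iff_ge hw hx).1 hTx⟩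
    · rintro ⟨hAx, hxw⟩
      have hx : x ∈ Icc A B := ⟨hAx, hxw.trans hw.2⟩
      exact ⟨hx, (hT.le_iff_ge hw hx).2 hxw⟩
  have hIio : μ (Iio A) = 0 :=
    measure_mono_null (fun x (hx : x < A) hx' => hx.not_ge (mem_Icc.1 hx').1)
      ((prob_compl_eq_zero_iff measurableSet_Icc).2 hsupp)
  rw [hset, cdf_eq_real, ← Iio_union_Icc_eq_Iic hw.1, measureReal_def, measureReal_def,
    measure_union ((Iio_disjoint_Ici le_rfl).mono_right Icc_subset_Ici_self) measurableSet_Icc,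
    hIio, zero_add]

theorem stmt6_general (A B : ℝ)
    (μ : Measure ℝ) [IsProbabilityMeasure μ] [NullSingletonClass μ]
    (hsupp : μ (Icc A B) = 1)
    (n g F G T h h' : ℝ → ℝ)
    (hn : StrictMonoOn n (Icc A B))
    (hnpos : ∀ v ∈ Icc A B, 0 < n v)
    (hgmono : StrictMonoOn g (Ici 0))
    (hg0 : g 0 = 0)
    (hhmono : MonotoneOn h (Icc 0 1))
    (hhderiv : ∀ s ∈ Icc (0:ℝ) 1, HasDerivAt h (h' s) s)
    (hhcont : ContinuousOn h' (Icc 0 1))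
    (hG : ∀ v, G v = (μ (Iic v)).toReal)
    (hF : ∀ t, F t = (μ {x ∈ Icc A B | t ≤ T x}).toReal)
    (hTnonneg : ∀ v ∈ Icc A B, 0 ≤ T v)
    (hTanti : StrictAntiOn T (Icc A B))
    (hNE : ∀ v ∈ Icc A B, ∀ t, 0 ≤ t →
      h (F (T v)) + n v * g (T v) ≤ h (F t) + n v * g t) :
    ∀ v ∈ Icc A B, g (T v) = ∫ x in Ioc v B, h' (G x) / n x ∂μ := by
  intro v hv
  have hB : B ∈ Icc A B := ⟨hv.1.trans hv.2, le_rfl⟩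
  obtain rfl : G = cdf μ := funext fun x => by rw [hG, cdf_eq_real, measureReal_def]
  have hFT : ∀ w ∈ Icc A B, F (T w) = cdf μ w := fun w hw => by
    rw [hF, ← measureReal_def, measureReal_setOf_le_of_strictAntiOn hsupp hTanti hw]
  have hF0 : F 0 = 1 := by
    rw [hF, show {x ∈ Icc A B | 0 ≤ T x} = Icc A B from sep_eq_self_iff_mem_true.2 hTnonneg,
      hsupp, ENNReal.toReal_one]
  have hu_B : g (T B) = 0 := by
    have hcost := hNE B hB 0 le_rfl
    rw [hF0, hFT B hB, cdf_eq_one_of_measure_Icc_eq_one hsupp, hg0, mul_zero, add_zero,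
      add_le_iff_nonpos_right] at hcost
    refine le_antisymm (nonpos_of_mul_nonpos_right hcost (hnpos B hB)) ?_
    exact hg0 ▸ hgmono.monotoneOn self_mem_Ici (hTnonneg B hB) (hTnonneg B hB)
  rw [setIntegral_comp_cdf_div_eq_sub μ hnpos hn.monotoneOn hhmono hhderiv hhcont
    (u := fun x => g (T x)) (fun a ha b hb _ => ?_) hv, hu_B, sub_zero]
  have hcost_a := hNE a ha (T b) (hTnonneg b hb)
  have hcost_b := hNE b hb (T a) (hTnonneg a ha)
  rw [hFT a ha, hFT b hb] at hcost_a hcost_b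
  constructor <;> linarith

/-- In the generalized single-queue game with cost
`c_v(t) = h(F(t)) + n(v)·g(t)`, any differentiable strictly decreasing Nash
equilibrium is unique and given by
`T(v) = g⁻¹( ∫_v^B h'(G(x))/n(x) dG(x) )`, stated equivalently via `g(T(v))`. -/
theorem stmt6 (A B : ℝ) (hAB : A ≤ B)
    (μ : Measure ℝ) [IsProbabilityMeasure μ] [NullSingletonClass μ]
    (hsupp : μ (Icc A B) = 1)
    (n g F G T h h' : ℝ → ℝ)
    (hn : StrictMonoOn n (Icc A B))
    (hnpos : ∀ v ∈ Icc A B, 0 < n v)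
    (hgmono : StrictMonoOn g (Ici 0))
    (hgdiff : ∀ t ∈ Ici (0:ℝ), DifferentiableAt ℝ g t)
    (hg0 : g 0 = 0)
    (hhmono : MonotoneOn h (Icc 0 1))
    (hhderiv : ∀ s ∈ Icc (0:ℝ) 1, HasDerivAt h (h' s) s)
    (hhcont : ContinuousOn h' (Icc 0 1))
    (hG : ∀ v, G v = (μ (Iic v)).toReal)
    (hF : ∀ t, F t = (μ {x ∈ Icc A B | t ≤ T x}).toReal)
    (hTnonneg : ∀ v ∈ Icc A B, 0 ≤ T v)
    (hTanti : StrictAntiOn T (Icc A B))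
    (hTdiff : ∀ v ∈ Icc A B, DifferentiableAt ℝ T v)
    (hNE : ∀ v ∈ Icc A B, ∀ t, 0 ≤ t →
      h (F (T v)) + n v * g (T v) ≤ h (F t) + n v * g t) :
    ∀ v ∈ Icc A B, g (T v) = ∫ x in Ioc v B, h' (G x) / n x ∂μ :=
  stmt6_general A B μ hsupp n g F G T h h' hn hnpos hgmono hg0 hhmono hhderiv hhcont hG hF hTnonneg
    hTanti hNE
end

section
/- In the L-queue boarding game, at any Nash equilibrium, the arrival-time function T_l(v) at each queue l is non-increasing in v. -/
open MeasureTheory Set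

/-- In the `L`-queue boarding game, at any Nash equilibrium the
arrival-time function `T l` at each queue `l` is non-increasing in the type. -/
theorem stmt7 (A B N : ℝ) (L : ℕ) (hAB : A ≤ B) (hN : 0 < N)
    (μ : Measure ℝ) [IsProbabilityMeasure μ]
    (n m g : ℝ → ℝ) (P : ℕ → ℝ)
    (F T q : ℕ → ℝ → ℝ)
    (hn : StrictMonoOn n (Icc A B))
    (hm : AntitoneOn m (Icc A B))
    (hg : StrictMonoOn g (Ici 0)) (hg0 : g 0 = 0)
    (hP0 : P 0 = 0)
    (hPmono : ∀ l, l + 1 < L → P l < P (l + 1))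
    (hq : ∀ l < L, ∀ x ∈ Icc A B, 0 ≤ q l x ∧ q l x ≤ 1)
    (hqsum : ∀ x ∈ Icc A B, ∑ l ∈ Finset.range L, q l x = 1)
    (hF : ∀ l < L, ∀ t, F l t =
      ∫ x in Icc A B, (if t ≤ T l x then q l x else 0) ∂μ)
    (hTnonneg : ∀ l < L, ∀ v ∈ Icc A B, 0 ≤ T l v)
    (hNE : ∀ l < L, ∀ v ∈ Icc A B, ∀ t, 0 ≤ t →
      m v * P l + N * (∑ j ∈ Finset.Ico (l + 1) L, F j 0)
        + N * F l (T l v) + n v * g (T l v)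
      ≤ m v * P l + N * (∑ j ∈ Finset.Ico (l + 1) L, F j 0)
        + N * F l t + n v * g t) :
    ∀ l < L, AntitoneOn (T l) (Icc A B) := by
  intro l hl v hv w hw hvw
  rcases eq_or_lt_of_le hvw with rfl | hlt
  · exact le_refl _
  · by_contra hc
    push_neg at hc
    have hTv := hTnonneg l hl v hv
    have hTw := hTnonneg l hl w hw
    have h1 := hNE l hl v hv (T l w) hTw
    have h2 := hNE l hl w hw (T l v) hTv
    have hnvw : n v < n w := hn hv hw hlt
    have hgvw : g (T l v) < g (T l w) := hg (mem_Ici.2 hTv) (mem_Ici.2 hTw) hc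
    nlinarith [h1, h2, hnvw, hgvw]
end
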